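/- arXiv:1811.05811 — 3 statements merged into one kernel-verified Lean document; each statement's English description precedes it below -/
import Mathlib

section
/- Let G be a finite abelian group, let H be a subgroup of G of index 2, let B = G \ H, let S ⊆ H be a sum-free set, and let t = |{x ∈ G : x + x = 0}|. Then N₁ + N₂ ≥ (|S ∪ (−S)| + |S|)·|B|/2 − |S|·|S ∪ (−S)|·t, where N₁ is the number of unordered pairs {x, y} of distinct elements of B with x + y ∈ S or x − y ∈ S ∪ (−S), and N₂ is the number of x ∈ B with x + x ∈ S. -/
/-!
Count the ordered pairs `(x, y) ∈ B × B` with `x + y ∈ S` and those with `x - y ∈ S ∪ -S`.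
Since `B = G \ H` and `S ⊆ H`, fixing `x ∈ B` every `y` with `x + y ∈ S` or `x - y ∈ S ∪ -S`
lies in `B` again, so there are exactly `|S|·|B|` and `|S ∪ -S|·|B|` of them. Off the diagonal
each such pair is an ordered edge of the link graph; on the diagonal only pairs of the first kind
occur (sum-freeness gives `0 ∉ S`), and these are loops. A pair counted twice has
`x + y = s ∈ S` and `x - y = u ∈ S ∪ -S`, so it is determined by `x`, a solution of
`x + x = s + u`; there are at most `t` of those for each `(s, u)`. Hence
`(|S| + |S ∪ -S|)·|B| ≤ 2 N₁ + N₂ + t·|S|·|S ∪ -S|`.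
-/

open Pointwise

/-- A subset `A` of an additive group is *sum-free* if there are no
`x, y, z ∈ A` (not necessarily distinct) with `x + y = z`. -/
def IsSumFree {G : Type*} [AddCommGroup G] (A : Set G) : Prop :=
  ∀ x ∈ A, ∀ y ∈ A, x + y ∉ A

open Finset in
theorem card_filter_add_self_eq_le {G : Type*} [AddCommGroup G] [Fintype G] [DecidableEq G]
    (c : G) : #{x : G | x + x = c} ≤ #{x : G | x + x = 0} := by
  obtain h | ⟨x₀, hx₀⟩ := Finset.eq_empty_or_nonempty {x : G | x + x = c}
  · simp [h]
  · rw [mem_filter_univ] at hx₀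
    refine card_le_card_of_injOn (· - x₀) (fun x hx => ?_) sub_left_injective.injOn
    simp only [coe_filter, mem_univ, true_and, Set.mem_ofPred_eq] at hx ⊢
    rw [← hx₀] at hx
    rw [sub_add_sub_comm, hx, sub_self]

open Finset in
theorem ncard_setOf_add_mem_sub_mem_le {G : Type*} [AddCommGroup G] [Finite G]
    (S U : Set G) :
    {p : G × G | p.1 + p.2 ∈ S ∧ p.1 - p.2 ∈ U}.ncard ≤
      {x : G | x + x = 0}.ncard * (S.ncard * U.ncard) := by
  classical
  cases nonempty_fintype G
  simp only [Set.ncard_eq_toFinset_card', Set.toFinset_ofPred]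
  rw [← card_product]
  refine card_le_mul_card_image_of_maps_to (f := fun p : G × G => (p.1 + p.2, p.1 - p.2))
    (fun p hp => by simpa using hp) _ fun ⟨a, b⟩ _ => ?_
  refine (card_le_card_of_injOn Prod.fst (fun p hp => ?_) fun p hp q hq hpq => ?_).trans
    (card_filter_add_self_eq_le (a + b))
  · simp only [coe_filter, mem_univ, true_and, Set.mem_ofPred_eq, Prod.mk.injEq] at hp ⊢
    rw [← hp.2.1, ← hp.2.2]
    abel
  · simp only [coe_filter, Set.mem_ofPred_eq, Prod.mk.injEq] at hp hq
    ext
    · exact hpq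
    · exact add_left_cancel (hpq ▸ hp.2.1.trans hq.2.1.symm)

theorem ncard_setOf_pair_mem_eq_mul {α : Type*} (B T : Set α) (φ : α → α ≃ α)
    (h : ∀ x ∈ B, ∀ y, φ x y ∈ T → y ∈ B) :
    {p : α × α | p.1 ∈ B ∧ p.2 ∈ B ∧ φ p.1 p.2 ∈ T}.ncard = T.ncard * B.ncard := by
  have himage : {p : α × α | p.1 ∈ B ∧ p.2 ∈ B ∧ φ p.1 p.2 ∈ T} =
      (fun q : α × α => (q.2, (φ q.2).symm q.1)) '' T ×ˢ B := by
    ext ⟨x, y⟩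
    constructor
    · rintro ⟨hx, -, hy⟩
      exact ⟨(φ x y, x), ⟨hy, hx⟩, by simp⟩
    · rintro ⟨⟨t, x'⟩, ⟨ht, hx'⟩, h'⟩
      simp only [Prod.mk.injEq] at h'
      obtain ⟨rfl, rfl⟩ := h'
      exact ⟨hx', h _ hx' _ (by simpa using ht), by simpa using ht⟩
  rw [himage, Set.ncard_image_of_injective _ fun q q' hq => ?_, Set.ncard_prod]
  simp only [Prod.mk.injEq] at hq
  obtain ⟨h2, h1⟩ := hq
  rw [h2] at h1
  exact Prod.ext ((φ q'.2).symm.injective h1) h2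

theorem SimpleGraph.two_mul_ncard_edgeSet {V : Type*} [Finite V] (Γ : SimpleGraph V) :
    2 * Γ.edgeSet.ncard = {p : V × V | Γ.Adj p.1 p.2}.ncard := by
  classical
  cases nonempty_fintype V
  rw [Set.ncard_eq_toFinset_card', Set.ncard_eq_toFinset_card', ← SimpleGraph.edgeFinset,
    SimpleGraph.two_mul_card_edgeFinset, Set.toFinset_ofPred]

theorem IsSumFree.zero_notMem {G : Type*} [AddCommGroup G] {S : Set G} (hS : IsSumFree S) :
    (0 : G) ∉ S :=
  fun h => hS 0 h 0 h (by rwa [add_zero])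

theorem neg_mem_union_neg {G : Type*} [AddCommGroup G] {S : Set G} {u : G} (hu : u ∈ S ∪ -S) :
    -u ∈ S ∪ -S := by
  simpa [or_comm] using hu

section LinkGraph

variable {G : Type*} [AddCommGroup G]

def linkGraph (S B : Set G) : SimpleGraph G where
  Adj x y := x ∈ B ∧ y ∈ B ∧ x ≠ y ∧ (x + y ∈ S ∨ x - y ∈ S ∪ -S)
  symm := ⟨fun x y ⟨hx, hy, hxy, h⟩ =>
    ⟨hy, hx, hxy.symm,
      h.imp (fun h => by rwa [add_comm]) fun h => by simpa using neg_mem_union_neg h⟩⟩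
  loopless := ⟨fun _ h => h.2.2.1 rfl⟩

theorem linkGraph_edgeSet (S B : Set G) :
    (linkGraph S B).edgeSet = {p : Sym2 G | ∃ x y : G, p = s(x, y) ∧ x ∈ B ∧ y ∈ B ∧ x ≠ y ∧
        (x + y ∈ S ∨ x - y ∈ S ∪ -S)} := by
  ext p
  induction p with
  | _ a b =>
    rw [SimpleGraph.mem_edgeSet]
    refine ⟨fun h => ⟨a, b, rfl, h⟩, ?_⟩
    rintro ⟨x, y, hp, h⟩
    rcases Sym2.eq_iff.mp hp with ⟨rfl, rfl⟩ | ⟨rfl, rfl⟩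
    · exact h
    · exact (linkGraph S B).adj_symm h

end LinkGraph

theorem le_two_mul_ncard_edgeSet_linkGraph_add {G : Type*} [AddCommGroup G] [Finite G]
    (H : AddSubgroup G) {S : Set G} (hSH : S ⊆ H) (hS0 : (0 : G) ∉ S) :
    (S.ncard + (S ∪ -S).ncard) * (H : Set G)ᶜ.ncard ≤
      2 * (linkGraph S (H : Set G)ᶜ).edgeSet.ncard + {x ∈ (H : Set G)ᶜ | x + x ∈ S}.ncard +
        {x : G | x + x = 0}.ncard * (S.ncard * (S ∪ -S).ncard) := by
  set U := S ∪ -S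
  set B := (H : Set G)ᶜ
  have hUH : U ⊆ H := Set.union_subset hSH fun u hu => neg_neg u ▸ H.neg_mem (hSH hu)
  have hU0 : (0 : G) ∉ U := by simpa [U] using hS0
  set A := {p : G × G | p.1 ∈ B ∧ p.2 ∈ B ∧ p.1 + p.2 ∈ S}
  set D := {p : G × G | p.1 ∈ B ∧ p.2 ∈ B ∧ p.1 - p.2 ∈ U}
  have hA : A.ncard = S.ncard * B.ncard :=
    ncard_setOf_pair_mem_eq_mul B S Equiv.addLeft fun x hx y hxy hy =>
      hx ((H.add_mem_cancel_right hy).mp (hSH hxy))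
  have hD : D.ncard = U.ncard * B.ncard :=
    ncard_setOf_pair_mem_eq_mul B U Equiv.subLeft fun x hx y hxy hy =>
      hx (sub_add_cancel x y ▸ H.add_mem (hUH hxy) hy)
  have hunion : A ∪ D ⊆
      {p | (linkGraph S B).Adj p.1 p.2} ∪ (fun x => (x, x)) '' {x ∈ B | x + x ∈ S} := by
    rintro ⟨x, y⟩ hp
    obtain rfl | hxy := eq_or_ne x y
    · obtain ⟨hx, -, hxx⟩ | ⟨-, -, h0⟩ := hp
      · exact Or.inr ⟨x, ⟨hx, hxx⟩, rfl⟩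
      · exact absurd (sub_self x ▸ h0) hU0
    · obtain ⟨hx, hy, h⟩ | ⟨hx, hy, h⟩ := hp
      · exact Or.inl ⟨hx, hy, hxy, Or.inl h⟩
      · exact Or.inl ⟨hx, hy, hxy, Or.inr h⟩
  have hinter : A ∩ D ⊆ {p : G × G | p.1 + p.2 ∈ S ∧ p.1 - p.2 ∈ U} :=
    fun p hp => ⟨hp.1.2.2, hp.2.2.2⟩
  calc (S.ncard + U.ncard) * B.ncard = (A ∪ D).ncard + (A ∩ D).ncard := by
        rw [Set.ncard_union_add_ncard_inter, hA, hD, add_mul]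
    _ ≤ ({p : G × G | (linkGraph S B).Adj p.1 p.2}.ncard +
          ((fun x => (x, x)) '' {x ∈ B | x + x ∈ S}).ncard) +
          {p : G × G | p.1 + p.2 ∈ S ∧ p.1 - p.2 ∈ U}.ncard :=
        add_le_add ((Set.ncard_le_ncard hunion).trans (Set.ncard_union_le _ _))
          (Set.ncard_le_ncard hinter)
    _ ≤ _ := by
        rw [← SimpleGraph.two_mul_ncard_edgeSet,
          Set.ncard_image_of_injective _ fun x y h => (Prod.mk.inj h).1]
        exact Nat.add_le_add_left (ncard_setOf_add_mem_sub_mem_le S U) _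

theorem edge_count_of_link_graph_general
    {G : Type*} [AddCommGroup G] [Fintype G]
    (H : AddSubgroup G)
    (B : Set G) (hB : B = (H : Set G)ᶜ)
    (S : Set G) (hSH : S ⊆ (H : Set G)) (hSF : IsSumFree S)
    (t : ℕ) (ht : t = {x : G | x + x = 0}.ncard)
    (N₁ N₂ : ℕ)
    (hN₁ : N₁ = {p : Sym2 G | ∃ x y : G, p = s(x, y) ∧ x ∈ B ∧ y ∈ B ∧ x ≠ y ∧
        (x + y ∈ S ∨ x - y ∈ S ∪ -S)}.ncard)
    (hN₂ : N₂ = {x ∈ B | x + x ∈ S}.ncard) :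
    (N₁ : ℝ) + N₂ ≥
      (((S ∪ -S).ncard : ℝ) + S.ncard) * B.ncard / 2
        - (S.ncard : ℝ) * (S ∪ -S).ncard * t := by
  subst hB ht hN₂
  rw [← linkGraph_edgeSet] at hN₁
  subst hN₁
  have key : ((S.ncard + (S ∪ -S).ncard) * (H : Set G)ᶜ.ncard : ℝ) ≤
      2 * (linkGraph S (H : Set G)ᶜ).edgeSet.ncard + {x ∈ (H : Set G)ᶜ | x + x ∈ S}.ncard +
        {x : G | x + x = 0}.ncard * (S.ncard * (S ∪ -S).ncard) := by
    exact_mod_cast le_two_mul_ncard_edgeSet_linkGraph_add H hSH hSF.zero_notMem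
  have hcollisions : (0 : ℝ) ≤ {x : G | x + x = 0}.ncard * (S.ncard * (S ∪ -S).ncard) := by
    positivity
  have hloops : (0 : ℝ) ≤ {x ∈ (H : Set G)ᶜ | x + x ∈ S}.ncard := by positivity
  linarith

/-- Lower bound on the number of edges of the link graph `L_S[B]`: with `B` the
nontrivial coset of an index-2 subgroup, `S ⊆ H` sum-free, and `t` the number of
solutions of `x + x = 0` in `G`, the number `N₁` of unordered adjacent pairs plus the
number `N₂` of loops of the form `x + x ∈ S` is at least
`(|S ∪ (−S)| + |S|)·|B|/2 − |S|·|S ∪ (−S)|·t`. -/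
theorem edge_count_of_link_graph
    {G : Type*} [AddCommGroup G] [Fintype G]
    (H : AddSubgroup G) (hidx : H.index = 2)
    (B : Set G) (hB : B = (H : Set G)ᶜ)
    (S : Set G) (hSH : S ⊆ (H : Set G)) (hSF : IsSumFree S)
    (t : ℕ) (ht : t = {x : G | x + x = 0}.ncard)
    (N₁ N₂ : ℕ)
    (hN₁ : N₁ = {p : Sym2 G | ∃ x y : G, p = s(x, y) ∧ x ∈ B ∧ y ∈ B ∧ x ≠ y ∧
        (x + y ∈ S ∨ x - y ∈ S ∪ -S)}.ncard)
    (hN₂ : N₂ = {x ∈ B | x + x ∈ S}.ncard) :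
    (N₁ : ℝ) + N₂ ≥
      (((S ∪ -S).ncard : ℝ) + S.ncard) * B.ncard / 2
        - (S.ncard : ℝ) * (S ∪ -S).ncard * t :=
  edge_count_of_link_graph_general H B hB S hSH hSF t ht N₁ N₂ hN₁ hN₂
end

section
/- Every finite simple graph Γ on n vertices has at most 3^{n/3} maximal independent sets, i.e. mis(Γ) ≤ 3^{n/3}. -/
/-!
Fix a vertex `v` of minimum degree and let `k = |N[v]|`. Every maximal independent set `I` meets
the closed neighbourhood `N[v]`, and if `u ∈ I ∩ N[v]` then `I` is `u` together with a maximal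
independent set of `Γ - N[u]`, a graph on at most `n - k` vertices. By induction,
`mis(Γ)³ ≤ (k · 3^((n-k)/3))³ ≤ 3^k · 3^(n-k) = 3^n`, using `k³ ≤ 3^k`.
-/

/-- The number of maximal independent sets of a simple graph. -/
noncomputable def misSG {V : Type*} (Γ : SimpleGraph V) : ℕ :=
  Nat.card {I : Set V // (∀ x ∈ I, ∀ y ∈ I, ¬ Γ.Adj x y) ∧
    ∀ J : Set V, (∀ x ∈ J, ∀ y ∈ J, ¬ Γ.Adj x y) → I ⊆ J → I = J}

lemma pow_three_le_three_pow (k : ℕ) : k ^ 3 ≤ 3 ^ k := by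
  rcases lt_or_ge k 3 with hk | hk
  · interval_cases k <;> norm_num
  induction k, hk using Nat.le_induction with
  | base => norm_num
  | succ k hk ih =>
    calc (k + 1) ^ 3 ≤ 3 * k ^ 3 := by
          nlinarith [Nat.mul_le_mul_left (k * k) hk, Nat.mul_le_mul_left k hk]
      _ ≤ 3 * 3 ^ k := Nat.mul_le_mul_left 3 ih
      _ = 3 ^ (k + 1) := (pow_succ' 3 k).symm

namespace SimpleGraph

variable {V : Type*} (G : SimpleGraph V)

def closedNeighborSet (v : V) : Set V := insert v (G.neighborSet v)

lemma misSG_eq_card_maximal_isIndepSet :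
    misSG G = Nat.card {I : Set V // Maximal G.IsIndepSet I} := by
  refine Nat.card_congr (Equiv.subtypeEquivRight fun I => ?_)
  have hIndep (J : Set V) : (∀ x ∈ J, ∀ y ∈ J, ¬ G.Adj x y) ↔ G.IsIndepSet J :=
    ⟨fun h x hx y hy _ => h x hx y hy, fun h x hx y hy hxy => h hx hy (G.ne_of_adj hxy) hxy⟩
  simp only [hIndep]
  exact ⟨fun h => ⟨h.1, fun J hJ hIJ => (h.2 J hJ hIJ).ge⟩,
    fun h => ⟨h.1, fun J hJ hIJ => hIJ.antisymm (h.2 hJ hIJ)⟩⟩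

variable {G}

lemma mem_closedNeighborSet_self (v : V) : v ∈ G.closedNeighborSet v := Set.mem_insert v _

lemma isIndepSet_induce_iff {s : Set V} {J : Set s} :
    (G.induce s).IsIndepSet J ↔ G.IsIndepSet (Subtype.val '' J) := by
  simp [IsIndepSet, Set.Pairwise]

lemma IsIndepSet.insert_of_forall_not_adj {J : Set V} (hJ : G.IsIndepSet J) {u : V}
    (h : ∀ x ∈ J, ¬ G.Adj u x) : G.IsIndepSet (insert u J) :=
  hJ.insert fun x hx _ => ⟨h x hx, fun hxu => h x hx hxu.symm⟩

lemma IsIndepSet.inter_closedNeighborSet {I : Set V} (hI : G.IsIndepSet I) {u : V} (hu : u ∈ I) :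
    I ∩ G.closedNeighborSet u = {u} := by
  ext x
  simp only [closedNeighborSet, Set.mem_inter_iff, Set.mem_insert_iff, mem_neighborSet,
    Set.mem_singleton_iff]
  constructor
  · rintro ⟨hx, rfl | hux⟩
    · rfl
    · exact (hI.eq hu hx (not_not.2 hux)).symm
  · rintro rfl
    exact ⟨hu, .inl rfl⟩

lemma IsIndepSet.eq_insert_image_preimage {I : Set V} (hI : G.IsIndepSet I) {u : V} (hu : u ∈ I) :
    I = insert u (Subtype.val '' (Subtype.val ⁻¹' I : Set ↥(G.closedNeighborSet u)ᶜ)) := by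
  conv_lhs => rw [← Set.inter_union_compl I (G.closedNeighborSet u)]
  rw [hI.inter_closedNeighborSet hu, Subtype.image_preimage_coe, Set.inter_comm,
    Set.singleton_union]

lemma exists_mem_closedNeighborSet_of_maximal {I : Set V} (hI : Maximal G.IsIndepSet I) (v : V) :
    ∃ u ∈ G.closedNeighborSet v, u ∈ I := by
  by_contra! h
  have hv : v ∉ I := h v (mem_closedNeighborSet_self v)
  have hvI : G.IsIndepSet (insert v I) :=
    hI.1.insert_of_forall_not_adj fun x hx hvx => h x (.inr hvx) hx
  exact hv (hI.2 hvI (Set.subset_insert v I) (Set.mem_insert v I))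

lemma maximal_isIndepSet_induce_compl_closedNeighborSet {I : Set V}
    (hI : Maximal G.IsIndepSet I) {u : V} (hu : u ∈ I) :
    Maximal (G.induce (G.closedNeighborSet u)ᶜ).IsIndepSet (Subtype.val ⁻¹' I) := by
  refine ⟨fun x hx y hy hxy => hI.1 hx hy (Subtype.val_injective.ne hxy), fun J hJ hIJ => ?_⟩
  have hJu : G.IsIndepSet (insert u (Subtype.val '' J)) :=
    (isIndepSet_induce_iff.1 hJ).insert_of_forall_not_adj <| by
      rintro _ ⟨x, -, rfl⟩ hux
      exact x.2 (.inr hux)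
  have hIJu : I ⊆ insert u (Subtype.val '' J) := by
    rw [hI.1.eq_insert_image_preimage hu]
    exact Set.insert_subset_insert (Set.image_mono hIJ)
  exact fun x hx => hI.2 hJu hIJu (.inr ⟨x, hx, rfl⟩)

lemma misSG_le_ncard_mul [Finite V] (v : V) {B : ℕ}
    (hB : ∀ u, misSG (G.induce (G.closedNeighborSet u)ᶜ) ≤ B) :
    misSG G ≤ (G.closedNeighborSet v).ncard * B := by
  have := Fintype.ofFinite (G.closedNeighborSet v)
  let f : {I // Maximal G.IsIndepSet I} → Σ u : G.closedNeighborSet v,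
      {J // Maximal (G.induce (G.closedNeighborSet u)ᶜ).IsIndepSet J} := fun I =>
    have h := exists_mem_closedNeighborSet_of_maximal I.2 v
    ⟨⟨h.choose, h.choose_spec.1⟩,
      ⟨_, maximal_isIndepSet_induce_compl_closedNeighborSet I.2 h.choose_spec.2⟩⟩
  have hf : Function.Injective f := by
    have hrecover : ∀ I, I.1 =
        insert (f I).1.1 (Subtype.val '' ((f I).2 : Set ↥(G.closedNeighborSet (f I).1)ᶜ)) :=
      fun I => I.2.1.eq_insert_image_preimage
        (exists_mem_closedNeighborSet_of_maximal I.2 v).choose_spec.2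
    intro I I' hII'
    exact Subtype.ext (by rw [hrecover I, hrecover I', hII'])
  rw [misSG_eq_card_maximal_isIndepSet]
  calc Nat.card {I // Maximal G.IsIndepSet I}
      ≤ Nat.card (Σ u : G.closedNeighborSet v,
          {J // Maximal (G.induce (G.closedNeighborSet u)ᶜ).IsIndepSet J}) :=
        Nat.card_le_card_of_injective f hf
    _ = ∑ u : G.closedNeighborSet v, misSG (G.induce (G.closedNeighborSet u)ᶜ) := by
        simp only [Nat.card_sigma, misSG_eq_card_maximal_isIndepSet]
    _ ≤ ∑ _u : G.closedNeighborSet v, B := Finset.sum_le_sum fun u _ => hB u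
    _ = (G.closedNeighborSet v).ncard * B := by
        rw [Finset.sum_const, Finset.card_univ, smul_eq_mul, ← Nat.card_eq_fintype_card,
          Nat.card_coe_set_eq]

lemma misSG_le_one_of_isEmpty [IsEmpty V] : misSG G ≤ 1 := by
  rw [misSG_eq_card_maximal_isIndepSet, Finite.card_le_one_iff_subsingleton]
  exact ⟨fun I J => Subtype.ext (I.1.eq_empty_of_isEmpty.trans J.1.eq_empty_of_isEmpty.symm)⟩

theorem misSG_pow_three_le [Finite V] (G : SimpleGraph V) : misSG G ^ 3 ≤ 3 ^ Nat.card V := by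
  induction h : Nat.card V using Nat.strong_induction_on generalizing V with
  | _ n ih =>
  rcases isEmpty_or_nonempty V with hV | hV
  · exact (pow_le_one₀ (Nat.zero_le _) G.misSG_le_one_of_isEmpty).trans
      (Nat.one_le_pow _ _ three_pos)
  obtain ⟨v, hv⟩ := Finite.exists_min fun u => (G.closedNeighborSet u).ncard
  obtain ⟨u, hu⟩ := Finite.exists_max fun u => misSG (G.induce (G.closedNeighborSet u)ᶜ)
  set k := (G.closedNeighborSet v).ncard
  set m := misSG (G.induce (G.closedNeighborSet u)ᶜ)
  have hk : k ≤ n := h ▸ Set.ncard_le_card _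
  have hm : m ^ 3 ≤ 3 ^ (n - k) := by
    have hpos : 0 < (G.closedNeighborSet u).ncard :=
      (Set.ncard_pos (Set.toFinite _)).2 ⟨u, mem_closedNeighborSet_self u⟩
    have hle : (G.closedNeighborSet u).ncard ≤ n := h ▸ Set.ncard_le_card _
    have hcard : Nat.card ↥(G.closedNeighborSet u)ᶜ = n - (G.closedNeighborSet u).ncard := by
      rw [Nat.card_coe_set_eq, Set.ncard_compl, h]
    have hvu := hv u
    exact (ih _ (by omega) _ hcard).trans (Nat.pow_le_pow_right three_pos (by omega))
  calc misSG G ^ 3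
      ≤ (k * m) ^ 3 := Nat.pow_le_pow_left (misSG_le_ncard_mul v hu) 3
    _ = k ^ 3 * m ^ 3 := mul_pow _ _ _
    _ ≤ 3 ^ k * 3 ^ (n - k) := Nat.mul_le_mul (pow_three_le_three_pow k) hm
    _ = 3 ^ n := by rw [← pow_add, Nat.add_sub_cancel' hk]

end SimpleGraph

/-- Moon–Moser: a finite simple graph on `n` vertices has at most `3 ^ (n/3)`
maximal independent sets. -/
theorem moon_moser (V : Type) [Fintype V] (Γ : SimpleGraph V) :
    (misSG Γ : ℝ) ≤ 3 ^ ((Fintype.card V : ℝ) / 3) := by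
  have h := Γ.misSG_pow_three_le
  rw [Nat.card_eq_fintype_card] at h
  refine le_of_pow_le_pow_left₀ three_ne_zero (by positivity) ?_
  rw [← Real.rpow_natCast (3 ^ _), ← Real.rpow_mul zero_le_three, Nat.cast_ofNat,
    div_mul_cancel₀ _ three_ne_zero, Real.rpow_natCast]
  exact_mod_cast h
end

section
/- Let k ≥ 1 be a real number and let Γ be a finite simple graph on n vertices with minimum degree δ(Γ) ≥ 1 and maximum degree Δ(Γ) ≤ k·δ(Γ). Set b = √(δ(Γ)). Then mis(Γ) ≤ Σ_{0 ≤ i ≤ n/b} C(n, i) · 3^{(k/(k+1))·(n/3) + 2n/(3b)}, where C(n, i) denotes the binomial coefficient. -/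
/-!
Branching on a vertex of minimum degree gives the Moon–Moser bound `3 ^ (m / 3)` for the number of
maximal independent sets of an `m`-vertex graph. Given a maximal independent set `I` of `Γ`, put
greedily into a fingerprint `S ⊆ I` vertices with at least `b = √δ` neighbours among the vertices
not yet dominated; each step removes more than `b` vertices, so `|S| ≤ n / b`. Then `I \ S` is a
maximal independent set of the set `L` of undominated vertices with fewer than `b` undominated
neighbours. Each vertex of `L` has more than `δ - b` neighbours among the at most `n - |L|`
dominated vertices, each of which has at most `kδ` neighbours, so `|L| ≤ kn/(k+1) + 2n/b`.
Summing the Moon–Moser bound for `L` over all possible fingerprints gives the theorem.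
-/

open Finset

theorem Finset.card_le_sum_card_of_forall_exists_sdiff_mem {α : Type*} [DecidableEq α]
    {𝓘 𝒮 : Finset (Finset α)} {𝓙 : Finset α → Finset (Finset α)}
    (h : ∀ I ∈ 𝓘, ∃ S ∈ 𝒮, S ⊆ I ∧ I \ S ∈ 𝓙 S) : #𝓘 ≤ ∑ S ∈ 𝒮, #(𝓙 S) := by
  choose! key hkey hsub hmem using h
  rw [← card_sigma]
  refine card_le_card_of_injOn (fun I => ⟨key I, I \ key I⟩)
    (fun I hI => mem_sigma.2 ⟨hkey I hI, hmem I hI⟩) fun I₁ h₁ I₂ h₂ heq => ?_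
  obtain ⟨hk, hd⟩ := Sigma.mk.inj_iff.1 heq
  rw [← union_sdiff_of_subset (hsub I₁ h₁), ← union_sdiff_of_subset (hsub I₂ h₂), eq_of_heq hd,
    hk]

theorem Finset.card_filter_card_le_le_sum_choose {α : Type*} (s : Finset α) (t : ℕ) :
    #{S ∈ s.powerset | #S ≤ t} ≤ ∑ i ∈ Iic t, (#s).choose i := by
  classical
  calc #{S ∈ s.powerset | #S ≤ t} ≤ #((Iic t).biUnion (powersetCard · s)) := by
        refine card_le_card fun S hS => ?_
        rw [mem_filter, mem_powerset] at hS
        exact mem_biUnion.2 ⟨#S, mem_Iic.2 hS.2, mem_powersetCard.2 ⟨hS.1, rfl⟩⟩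
    _ ≤ ∑ i ∈ Iic t, #(powersetCard i s) := card_biUnion_le
    _ = ∑ i ∈ Iic t, (#s).choose i := by simp only [card_powersetCard]

theorem Nat.cube_le_three_pow : ∀ m : ℕ, m ^ 3 ≤ 3 ^ m
  | 0 | 1 | 2 | 3 => by norm_num
  | m + 4 => by
    have ih := Nat.cube_le_three_pow (m + 3)
    have hstep : (m + 4) ^ 3 ≤ 3 * (m + 3) ^ 3 := by ring_nf; omega
    rw [pow_succ 3 (m + 3)]
    omega

theorem natCast_le_three_rpow_div_three (m : ℕ) : (m : ℝ) ≤ 3 ^ ((m : ℝ) / 3) := by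
  have hcube : ((3 : ℝ) ^ ((m : ℝ) / 3)) ^ 3 = 3 ^ m := by
    rw [← Real.rpow_mul_natCast (by norm_num)]
    norm_num
  refine le_of_pow_le_pow_left₀ three_ne_zero (by positivity) ?_
  rw [hcube]
  exact_mod_cast Nat.cube_le_three_pow m

theorem natCast_mul_three_rpow_le (m : ℕ) (x : ℝ) :
    m * (3 : ℝ) ^ ((x - m) / 3) ≤ 3 ^ (x / 3) := by
  calc m * (3 : ℝ) ^ ((x - m) / 3) ≤ 3 ^ ((m : ℝ) / 3) * 3 ^ ((x - m) / 3) := by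
        gcongr
        exact natCast_le_three_rpow_div_three m
    _ = 3 ^ (x / 3) := by
        rw [← Real.rpow_add (by norm_num)]
        ring_nf

theorem le_of_mul_sq_sub_le_mul_sq {k b L N : ℝ} (hk : 1 ≤ k) (hb : 1 ≤ b) (hL : 0 ≤ L)
    (h : L * (b ^ 2 - b) ≤ (N - L) * (k * b ^ 2)) : L ≤ k / (k + 1) * N + 2 * N / b := by
  have hc : k * b ≤ (k + 1) * b - 1 := by nlinarith
  have hLc : L * ((k + 1) * b - 1) ≤ N * k * b := by
    refine le_of_mul_le_mul_right ?_ (by linarith : (0 : ℝ) < b)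
    nlinarith
  have hkb : 0 < k * b := mul_pos (by linarith) (by linarith)
  have hc0 : 0 < (k + 1) * b - 1 := by linarith
  have hN : 0 ≤ N := by
    refine nonneg_of_mul_nonneg_left ?_ hkb
    nlinarith [mul_nonneg hL hc0.le]
  rw [div_mul_eq_mul_div, div_add_div _ _ (by positivity) (by positivity),
    le_div_iff₀ (by positivity)]
  refine le_of_mul_le_mul_right ?_ hc0
  calc L * ((k + 1) * b) * ((k + 1) * b - 1) = L * ((k + 1) * b - 1) * ((k + 1) * b) := by ring
    _ ≤ N * k * b * ((k + 1) * b) := by gcongr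
    _ ≤ (k * N * b + (k + 1) * (2 * N)) * ((k + 1) * b - 1) := by
        nlinarith [mul_le_mul_of_nonneg_left hc (by positivity : 0 ≤ 2 * N * (k + 1)),
          mul_nonneg hN hkb.le]

namespace SimpleGraph

section Defs

variable {V : Type*} (G : SimpleGraph V) [DecidableRel G.Adj]

def degreeIn (A : Finset V) (v : V) : ℕ := #{w ∈ A | G.Adj v w}

noncomputable def lowDegreeSet (b : ℝ) (R : Finset V) : Finset V :=
  {w ∈ R | (G.degreeIn R w : ℝ) < b}

variable [DecidableEq V]

/-- The maximal independent sets of the induced subgraph `G[A]`: the independent subsets of `A`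
that dominate `A`. -/
def maximalIndepSetsIn (A : Finset V) : Finset (Finset V) :=
  {I ∈ A.powerset | G.IsIndepSet I ∧ ∀ x ∈ A, (∀ y ∈ I, ¬ G.Adj x y) → x ∈ I}

def undominated (A S : Finset V) : Finset V := {x ∈ A | ∀ s ∈ S, s ≠ x ∧ ¬ G.Adj s x}

end Defs

variable {V : Type*} [DecidableEq V] {G : SimpleGraph V} [DecidableRel G.Adj]

theorem mem_maximalIndepSetsIn {A I : Finset V} :
    I ∈ G.maximalIndepSetsIn A ↔
      I ⊆ A ∧ G.IsIndepSet I ∧ ∀ x ∈ A, (∀ y ∈ I, ¬ G.Adj x y) → x ∈ I := by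
  rw [maximalIndepSetsIn, mem_filter, mem_powerset]

theorem maximalIndepSetsIn_empty : G.maximalIndepSetsIn ∅ = {∅} := by
  ext I
  simp +contextual [mem_maximalIndepSetsIn, subset_empty]

theorem undominated_subset (A S : Finset V) : G.undominated A S ⊆ A := filter_subset _ _

theorem undominated_empty (A : Finset V) : G.undominated A ∅ = A := by
  simp [undominated]

theorem undominated_undominated (A S T : Finset V) :
    G.undominated (G.undominated A S) T = G.undominated A (S ∪ T) := by
  ext x
  simp only [undominated, mem_filter, mem_union, and_assoc]
  grind

theorem card_undominated_singleton_add {A : Finset V} {u : V} (hu : u ∈ A) :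
    #(G.undominated A {u}) + (G.degreeIn A u + 1) = #A := by
  have hnbhd : {x ∈ A | ¬ (u ≠ x ∧ ¬ G.Adj u x)} = insert u {w ∈ A | G.Adj u w} := by
    ext x
    simp only [mem_filter, mem_insert]
    grind
  have hu' : u ∉ ({w ∈ A | G.Adj u w} : Finset V) := by simp
  rw [degreeIn, ← card_insert_of_notMem hu', ← hnbhd, undominated]
  simpa using card_filter_add_card_filter_not (s := A) (fun x => u ≠ x ∧ ¬ G.Adj u x)

theorem sdiff_subset_undominated {A I S : Finset V} (hI : G.IsIndepSet I) (hIA : I ⊆ A)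
    (hSI : S ⊆ I) : I \ S ⊆ G.undominated A S := by
  intro x hx
  obtain ⟨hxI, hxS⟩ := mem_sdiff.1 hx
  refine mem_filter.2 ⟨hIA hxI, fun s hs => ⟨fun h => hxS (h ▸ hs), fun h => ?_⟩⟩
  exact hI (hSI hs) hxI (fun h' => hxS (h' ▸ hs)) h

theorem sdiff_mem_maximalIndepSetsIn_undominated {A I S : Finset V}
    (hI : I ∈ G.maximalIndepSetsIn A) (hSI : S ⊆ I) :
    I \ S ∈ G.maximalIndepSetsIn (G.undominated A S) := by
  obtain ⟨hIA, hind, hdom⟩ := mem_maximalIndepSetsIn.1 hI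
  refine mem_maximalIndepSetsIn.2 ⟨sdiff_subset_undominated hind hIA hSI,
    hind.mono (by simp), fun x hx hnadj => ?_⟩
  obtain ⟨hxA, hxS⟩ := mem_filter.1 hx
  refine mem_sdiff.2 ⟨hdom x hxA fun y hy => ?_, fun h => (hxS x h).1 rfl⟩
  by_cases hyS : y ∈ S
  · exact fun h => (hxS y hyS).2 h.symm
  · exact hnadj y (mem_sdiff.2 ⟨hy, hyS⟩)

theorem mem_maximalIndepSetsIn_of_subset {A B I : Finset V} (hI : I ∈ G.maximalIndepSetsIn A)
    (hIB : I ⊆ B) (hBA : B ⊆ A) : I ∈ G.maximalIndepSetsIn B := by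
  obtain ⟨-, hind, hdom⟩ := mem_maximalIndepSetsIn.1 hI
  exact mem_maximalIndepSetsIn.2 ⟨hIB, hind, fun x hx => hdom x (hBA hx)⟩

theorem misSG_eq_card_maximalIndepSetsIn_univ [Fintype V] :
    misSG G = #(G.maximalIndepSetsIn univ) := by
  rw [← Nat.card_eq_finsetCard]
  refine Nat.card_congr (Equiv.subtypeEquiv Fintype.finsetEquivSet fun J => ?_).symm
  simp only [mem_maximalIndepSetsIn, subset_univ, mem_univ, true_and, true_implies,
    Fintype.finsetEquivSet_apply]
  constructor
  · rintro ⟨hind, hdom⟩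
    refine ⟨fun x hx y hy h => hind hx hy (G.ne_of_adj h) h,
      fun K hK hJK => hJK.antisymm fun x hx => hdom x fun y hy => hK x hx y (hJK hy)⟩
  · rintro ⟨hind, hmax⟩
    refine ⟨fun x hx y hy _ => hind x hx y hy, fun x hx => ?_⟩
    have hK : ∀ a ∈ insert x (J : Set V), ∀ c ∈ insert x (J : Set V), ¬ G.Adj a c := by
      rintro a (rfl | ha) c (rfl | hc)
      exacts [G.irrefl, hx c hc, fun h => hx a ha h.symm, hind a ha c hc]
    rw [← mem_coe, hmax _ hK (Set.subset_insert x _)]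
    exact Set.mem_insert x _

/-- Every maximal independent set of `G[A]` meets the closed neighbourhood of `v`; removing
a common vertex `u` together with its neighbours leaves a maximal independent set of the rest. -/
theorem card_maximalIndepSetsIn_le_sum_undominated {A : Finset V} {v : V} (hv : v ∈ A) :
    #(G.maximalIndepSetsIn A) ≤
      ∑ u ∈ insert v {w ∈ A | G.Adj v w}, #(G.maximalIndepSetsIn (G.undominated A {u})) := by
  rw [← sum_image (f := fun S => #(G.maximalIndepSetsIn (G.undominated A S)))
    fun _ _ _ _ => singleton_inj.1]
  refine card_le_sum_card_of_forall_exists_sdiff_mem fun I hI => ?_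
  obtain ⟨hIA, -, hdom⟩ := mem_maximalIndepSetsIn.1 hI
  obtain ⟨u, huI, hu⟩ : ∃ u ∈ I, u = v ∨ G.Adj v u := by
    by_contra! h
    exact (h v (hdom v hv fun y hy hvy => (h y hy).2 hvy)).1 rfl
  refine ⟨{u}, mem_image_of_mem _ ?_, singleton_subset_iff.2 huI,
    sdiff_mem_maximalIndepSetsIn_undominated hI (singleton_subset_iff.2 huI)⟩
  rcases hu with rfl | hvu
  · exact mem_insert_self _ _
  · exact mem_insert_of_mem (mem_filter.2 ⟨hIA huI, hvu⟩)

theorem card_maximalIndepSetsIn_le_three_rpow (A : Finset V) :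
    (#(G.maximalIndepSetsIn A) : ℝ) ≤ 3 ^ ((#A : ℝ) / 3) := by
  induction A using Finset.strongInduction with
  | _ A ih =>
  obtain rfl | hA := A.eq_empty_or_nonempty
  · simp [maximalIndepSetsIn_empty]
  obtain ⟨v, hv, hmin⟩ := A.exists_min_image (G.degreeIn A) hA
  set N := insert v {w ∈ A | G.Adj v w}
  have hN : #N = G.degreeIn A v + 1 := card_insert_of_notMem (by simp)
  have hbranch : ∀ u ∈ N,
      (#(G.maximalIndepSetsIn (G.undominated A {u})) : ℝ) ≤ 3 ^ ((#A - #N : ℝ) / 3) := by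
    intro u hu
    have huA : u ∈ A := by
      rcases mem_insert.1 hu with rfl | hu
      exacts [hv, (mem_filter.1 hu).1]
    have hcard := card_undominated_singleton_add (G := G) huA
    have hssub : G.undominated A {u} ⊂ A :=
      ssubset_of_subset_of_ne (undominated_subset A {u}) fun h => by rw [h] at hcard; omega
    refine (ih _ hssub).trans (Real.rpow_le_rpow_of_exponent_le (by norm_num) ?_)
    have : #N + #(G.undominated A {u}) ≤ #A := by have := hmin u huA; omega
    rw [div_le_div_iff_of_pos_right (by norm_num), le_sub_iff_add_le']
    exact_mod_cast this
  calc (#(G.maximalIndepSetsIn A) : ℝ)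
      ≤ ∑ u ∈ N, (#(G.maximalIndepSetsIn (G.undominated A {u})) : ℝ) := by
        exact_mod_cast card_maximalIndepSetsIn_le_sum_undominated hv
    _ ≤ #N * 3 ^ ((#A - #N : ℝ) / 3) := by
        simpa using sum_le_sum hbranch
    _ ≤ 3 ^ ((#A : ℝ) / 3) := natCast_mul_three_rpow_le _ _

theorem exists_fingerprint (b : ℝ) {W I : Finset V} (hI : G.IsIndepSet I) (hIW : I ⊆ W) :
    ∃ S ⊆ I, (b + 1) * #S + #(G.undominated W S) ≤ #W ∧
      I \ S ⊆ G.lowDegreeSet b (G.undominated W S) := by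
  induction W using Finset.strongInduction generalizing I with
  | _ W ih =>
  by_cases hhigh : ∃ u ∈ I, b ≤ G.degreeIn W u
  · obtain ⟨u, huI, hbu⟩ := hhigh
    have hcard := card_undominated_singleton_add (G := G) (hIW huI)
    have hssub : G.undominated W {u} ⊂ W :=
      ssubset_of_subset_of_ne (undominated_subset W {u}) fun h => by rw [h] at hcard; omega
    obtain ⟨S, hSI, hScard, hSlow⟩ := ih _ hssub (hI.mono sdiff_subset)
      (sdiff_subset_undominated hI hIW (singleton_subset_iff.2 huI))
    have huS : u ∉ S := fun h => (mem_sdiff.1 (hSI h)).2 (mem_singleton_self u)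
    refine ⟨{u} ∪ S, union_subset (singleton_subset_iff.2 huI) (hSI.trans sdiff_subset), ?_, ?_⟩
    · rw [← undominated_undominated, card_union_of_disjoint (disjoint_singleton_left.2 huS),
        card_singleton]
      have : (#(G.undominated W {u}) : ℝ) + (G.degreeIn W u + 1) = #W := by exact_mod_cast hcard
      push_cast
      linarith
    · rw [sdiff_sdiff_left] at hSlow
      rwa [← undominated_undominated]
  · push Not at hhigh
    refine ⟨∅, empty_subset I, by simp [undominated_empty], fun x hx => ?_⟩
    rw [undominated_empty]
    exact mem_filter.2 ⟨hIW (mem_sdiff.1 hx).1, hhigh x (mem_sdiff.1 hx).1⟩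

theorem card_maximalIndepSetsIn_le_sum_lowDegreeSet {b : ℝ} (hb : 0 < b) (A : Finset V) :
    #(G.maximalIndepSetsIn A) ≤ ∑ S ∈ {S ∈ A.powerset | #S ≤ ⌊(#A : ℝ) / b⌋₊},
      #(G.maximalIndepSetsIn (G.lowDegreeSet b (G.undominated A S))) := by
  refine card_le_sum_card_of_forall_exists_sdiff_mem fun I hI => ?_
  obtain ⟨hIA, hind, -⟩ := mem_maximalIndepSetsIn.1 hI
  obtain ⟨S, hSI, hcard, hlow⟩ := exists_fingerprint b hind hIA
  refine ⟨S, mem_filter.2 ⟨mem_powerset.2 (hSI.trans hIA), Nat.le_floor ?_⟩, hSI,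
    mem_maximalIndepSetsIn_of_subset (sdiff_mem_maximalIndepSetsIn_undominated hI hSI) hlow
      (filter_subset _ _)⟩
  rw [le_div_iff₀ hb]
  have : (0 : ℝ) ≤ #(G.undominated A S) := Nat.cast_nonneg _
  nlinarith [(Nat.cast_nonneg #S : (0 : ℝ) ≤ #S)]

section Fintype

variable [Fintype V]

theorem degreeIn_add_degreeIn_compl (R : Finset V) (w : V) :
    G.degreeIn R w + G.degreeIn Rᶜ w = G.degree w := by
  rw [degreeIn, degreeIn, ← card_union_of_disjoint (disjoint_filter_filter disjoint_compl_right),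
    ← filter_union, union_compl, ← card_neighborFinset_eq_degree, neighborFinset_eq_filter]

/-- Double counting the edges between the low-degree vertices of `G[R]` and `Rᶜ`. -/
theorem card_lowDegreeSet_mul_le (b : ℝ) (R : Finset V) :
    #(G.lowDegreeSet b R) * ((G.minDegree : ℝ) - b) ≤
      (Fintype.card V - #(G.lowDegreeSet b R)) * G.maxDegree := by
  have hout : ∀ w ∈ G.lowDegreeSet b R, (G.minDegree : ℝ) - b ≤ #(Rᶜ.bipartiteAbove G.Adj w) := by
    intro w hw
    have hsplit : (G.degreeIn R w : ℝ) + G.degreeIn Rᶜ w = G.degree w := by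
      exact_mod_cast degreeIn_add_degreeIn_compl R w
    have hmin : (G.minDegree : ℝ) ≤ G.degree w := by exact_mod_cast G.minDegree_le_degree w
    have hwb := (mem_filter.1 hw).2
    rw [bipartiteAbove]
    change _ ≤ (G.degreeIn Rᶜ w : ℝ)
    linarith
  have hin : ∀ v ∈ Rᶜ, (#((G.lowDegreeSet b R).bipartiteBelow G.Adj v) : ℝ) ≤ G.maxDegree := by
    intro v _
    have hsub : (G.lowDegreeSet b R).bipartiteBelow G.Adj v ⊆ G.neighborFinset v := fun w hw =>
      (mem_neighborFinset G v w).2 (mem_bipartiteBelow _ |>.1 hw).2.symm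
    exact_mod_cast (card_le_card hsub).trans (G.degree_le_maxDegree v)
  have hcount := card_nsmul_le_card_nsmul G.Adj hout hin
  have hcompl : #Rᶜ + #(G.lowDegreeSet b R) ≤ Fintype.card V := by
    rw [card_compl]
    have : #(G.lowDegreeSet b R) ≤ #R := card_le_card (filter_subset _ R)
    have := card_le_univ R
    omega
  rw [nsmul_eq_mul, nsmul_eq_mul] at hcount
  refine hcount.trans (mul_le_mul_of_nonneg_right ?_ (Nat.cast_nonneg _))
  rw [le_sub_iff_add_le]
  exact_mod_cast hcompl

theorem card_lowDegreeSet_le {k : ℝ} (hk : 1 ≤ k) (hδ : 1 ≤ G.minDegree)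
    (hΔ : (G.maxDegree : ℝ) ≤ k * G.minDegree) (R : Finset V) :
    (#(G.lowDegreeSet √(G.minDegree : ℝ) R) : ℝ) ≤
      k / (k + 1) * Fintype.card V + 2 * Fintype.card V / √(G.minDegree : ℝ) := by
  have hsq : √(G.minDegree : ℝ) ^ 2 = G.minDegree := Real.sq_sqrt (Nat.cast_nonneg _)
  refine le_of_mul_sq_sub_le_mul_sq hk (Real.one_le_sqrt.2 (by exact_mod_cast hδ))
    (Nat.cast_nonneg _) ?_
  rw [hsq]
  refine (card_lowDegreeSet_mul_le _ R).trans (mul_le_mul_of_nonneg_left hΔ ?_)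
  have := card_le_univ (G.lowDegreeSet √(G.minDegree : ℝ) R)
  rw [sub_nonneg]
  exact_mod_cast this

theorem card_maximalIndepSetsIn_lowDegreeSet_le {k : ℝ} (hk : 1 ≤ k) (hδ : 1 ≤ G.minDegree)
    (hΔ : (G.maxDegree : ℝ) ≤ k * G.minDegree) (R : Finset V) :
    (#(G.maximalIndepSetsIn (G.lowDegreeSet √(G.minDegree : ℝ) R)) : ℝ) ≤
      3 ^ (k / (k + 1) * ((Fintype.card V : ℝ) / 3) +
        2 * (Fintype.card V : ℝ) / (3 * √(G.minDegree : ℝ))) := by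
  refine (card_maximalIndepSetsIn_le_three_rpow _).trans
    (Real.rpow_le_rpow_of_exponent_le (by norm_num) ?_)
  have hL := card_lowDegreeSet_le hk hδ hΔ R
  have hsplit : 2 * (Fintype.card V : ℝ) / (3 * √(G.minDegree : ℝ)) =
      2 * Fintype.card V / √(G.minDegree : ℝ) / 3 := by ring
  linarith

end Fintype

end SimpleGraph

open SimpleGraph in
/-- Bound on the number of maximal independent sets of an almost-regular graph:
if `Δ(Γ) ≤ k·δ(Γ)` and `b = √δ(Γ)`, then
`mis(Γ) ≤ Σ_{0 ≤ i ≤ n/b} C(n,i) · 3^{(k/(k+1))·n/3 + 2n/(3b)}`. -/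
theorem mis_of_almost_regular_graph
    (k : ℝ) (hk : 1 ≤ k) (V : Type) [Fintype V] [DecidableEq V]
    (Γ : SimpleGraph V) [DecidableRel Γ.Adj]
    (n : ℕ) (hn : n = Fintype.card V)
    (hδ : 1 ≤ Γ.minDegree)
    (hΔ : (Γ.maxDegree : ℝ) ≤ k * Γ.minDegree)
    (b : ℝ) (hb : b = Real.sqrt (Γ.minDegree : ℝ)) :
    (misSG Γ : ℝ) ≤ (∑ i ∈ Finset.Iic ⌊(n : ℝ) / b⌋₊, (n.choose i : ℝ)) *
      3 ^ ((k / (k + 1)) * ((n : ℝ) / 3) + 2 * (n : ℝ) / (3 * b)) := by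
  subst hn hb
  set 𝒮 := {S ∈ (univ : Finset V).powerset | #S ≤ ⌊(Fintype.card V : ℝ) / √(Γ.minDegree : ℝ)⌋₊}
  have h𝒮 := card_filter_card_le_le_sum_choose (univ : Finset V)
    ⌊(Fintype.card V : ℝ) / √(Γ.minDegree : ℝ)⌋₊
  rw [card_univ] at h𝒮
  calc (misSG Γ : ℝ) = #(Γ.maximalIndepSetsIn univ) := by
        rw [misSG_eq_card_maximalIndepSetsIn_univ]
    _ ≤ ∑ S ∈ 𝒮, (#(Γ.maximalIndepSetsIn
          (Γ.lowDegreeSet √(Γ.minDegree : ℝ) (Γ.undominated univ S))) : ℝ) := by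
        exact_mod_cast card_maximalIndepSetsIn_le_sum_lowDegreeSet
          (Real.sqrt_pos.2 (by exact_mod_cast hδ)) univ
    _ ≤ #𝒮 • _ := sum_le_card_nsmul _ _ _ fun S _ =>
          card_maximalIndepSetsIn_lowDegreeSet_le hk hδ hΔ _
    _ ≤ _ := by
        rw [nsmul_eq_mul]
        gcongr
        exact_mod_cast h𝒮
end
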